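/- arXiv:1911.02064 — 3 statements merged into one kernel-verified Lean document; each statement's English description precedes it below -/
import Mathlib

section
/- If ψ : ℝ → ℝ is a twice continuously differentiable function satisfying ψ''(x) = U'(ψ(x)) for all x ∈ ℝ, with −1 ≤ ψ(x) ≤ 1 for all x, ∫_ℝ ψ'(x)² dx < ∞, ∫_ℝ U(ψ(x)) dx < ∞, lim_{x→−∞} ψ(x) = −1 and lim_{x→+∞} ψ(x) = 1, then there exists a ∈ ℝ such that ψ(x) = H(x − a) for all x ∈ ℝ. -/
open MeasureTheory Filter
open scoped ContDiff

/-- Gronwall-type lemma: a nonnegative differentiable function with |w'| ≤ C w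
vanishing at one point vanishes everywhere. -/
lemma gronwall_zero {w : ℝ → ℝ} {C : ℝ} (hC : 0 ≤ C) (hw : Differentiable ℝ w)
    (hnn : ∀ x, 0 ≤ w x) (hb : ∀ x, |deriv w x| ≤ C * w x) {x₀ : ℝ} (h0 : w x₀ = 0) :
    ∀ x, w x = 0 := by
  have hexp : ∀ c : ℝ, ∀ x : ℝ, HasDerivAt (fun y => Real.exp (c * y)) (Real.exp (c * x) * c) x := by
    intro c x
    simpa using ((hasDerivAt_id x).const_mul c).exp
  have hv : ∀ x, HasDerivAt (fun y => w y * Real.exp (-C * y))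
      (deriv w x * Real.exp (-C * x) + w x * (Real.exp (-C * x) * (-C))) x :=
    fun x => ((hw x).hasDerivAt).mul (hexp (-C) x)
  have hu : ∀ x, HasDerivAt (fun y => w y * Real.exp (C * y))
      (deriv w x * Real.exp (C * x) + w x * (Real.exp (C * x) * C)) x :=
    fun x => ((hw x).hasDerivAt).mul (hexp C x)
  intro x
  rcases le_total x₀ x with hle | hle
  · -- forward: v is antitone on Ici x₀
    have hanti : AntitoneOn (fun y => w y * Real.exp (-C * y)) (Set.Ici x₀) := by
      apply antitoneOn_of_deriv_nonpos (convex_Ici x₀)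
      · exact (Continuous.mul (hw.continuous) (by continuity)).continuousOn
      · intro y _; exact ((hv y).differentiableAt).differentiableWithinAt
      · intro y _
        rw [(hv y).deriv]
        have h1 : deriv w y ≤ C * w y := le_trans (le_abs_self _) (hb y)
        have h2 : (0:ℝ) < Real.exp (-C * y) := Real.exp_pos _
        nlinarith [hnn y]
    have := hanti (Set.self_mem_Ici) (Set.mem_Ici.mpr hle) hle
    simp only [h0, zero_mul] at this
    have h2 : (0:ℝ) < Real.exp (-C * x) := Real.exp_pos _
    nlinarith [hnn x]
  · -- backward: u is monotone on Iic x₀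
    have hmono : MonotoneOn (fun y => w y * Real.exp (C * y)) (Set.Iic x₀) := by
      apply monotoneOn_of_deriv_nonneg (convex_Iic x₀)
      · exact (Continuous.mul (hw.continuous) (by continuity)).continuousOn
      · intro y _; exact ((hu y).differentiableAt).differentiableWithinAt
      · intro y _
        rw [(hu y).deriv]
        have h1 : -(C * w y) ≤ deriv w y := neg_le_of_abs_le (hb y)
        have h2 : (0:ℝ) < Real.exp (C * y) := Real.exp_pos _
        nlinarith [hnn y]
    have := hmono (Set.mem_Iic.mpr hle) Set.self_mem_Iic hle
    simp only [h0, zero_mul] at this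
    have h2 : (0:ℝ) < Real.exp (C * x) := Real.exp_pos _
    nlinarith [hnn x]

/-- Every finite-energy stationary solution connecting `-1` to `1` is a translate of
the kink `H`. -/
theorem stationary_solution_is_kink
    (U : ℝ → ℝ) (hUsmooth : ContDiff ℝ (⊤ : ℕ∞) U) (hUnonneg : ∀ φ, 0 ≤ U φ)
    (hUeven : ∀ φ, U (-φ) = U φ) (hU1 : U 1 = 0) (hUneg1 : U (-1) = 0)
    (hUpos : ∀ φ ∈ Set.Ioo (-1 : ℝ) 1, 0 < U φ)
    (hU''1 : deriv (deriv U) 1 = 1) (hU''neg1 : deriv (deriv U) (-1) = 1)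
    (H : ℝ → ℝ) (hHrange : ∀ x, H x ∈ Set.Ioo (-1 : ℝ) 1)
    (hHinv : ∀ x, (∫ y in (0:ℝ)..(H x), (Real.sqrt (2 * U y))⁻¹) = x)
    (ψ : ℝ → ℝ) (hψ : ContDiff ℝ 2 ψ)
    (heq : ∀ x : ℝ, deriv (deriv ψ) x = deriv U (ψ x))
    (hbound : ∀ x : ℝ, ψ x ∈ Set.Icc (-1 : ℝ) 1)
    (hint1 : Integrable (fun x : ℝ => (deriv ψ x) ^ 2))
    (hint2 : Integrable (fun x : ℝ => U (ψ x)))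
    (hlim_bot : Tendsto ψ atBot (nhds (-1)))
    (hlim_top : Tendsto ψ atTop (nhds 1)) :
    ∃ a : ℝ, ∀ x : ℝ, ψ x = H (x - a) := by
  -- regularity
  have hψd : Differentiable ℝ ψ := hψ.differentiable (by norm_num)
  have hψ2 : ContDiff ℝ (1 + 1) ψ := by exact_mod_cast hψ
  have hψ'c1 : ContDiff ℝ 1 (deriv ψ) := (contDiff_succ_iff_deriv.mp hψ2).2.2
  have hψ'd : Differentiable ℝ (deriv ψ) := hψ'c1.differentiable one_ne_zero
  have hUd : Differentiable ℝ U := hUsmooth.differentiable (by simp)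
  have hUinf : ContDiff ℝ (∞ : WithTop ℕ∞) U := hUsmooth.of_le (by simp)
  have hU'c : ContDiff ℝ (∞ : WithTop ℕ∞) (deriv U) := (contDiff_infty_iff_deriv.mp hUinf).2
  have hU'd : Differentiable ℝ (deriv U) := hU'c.differentiable (by simp)
  have hU''cont : Continuous (deriv (deriv U)) :=
    ((contDiff_infty_iff_deriv.mp hU'c).2).continuous
  -- energy conservation
  have key : ∀ x : ℝ, (deriv ψ x) ^ 2 = 2 * U (ψ x) := by
    have hE : ∀ x : ℝ, HasDerivAt (fun x => (deriv ψ x) ^ 2 - 2 * U (ψ x)) 0 x := by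
      intro x
      have h1 : HasDerivAt (fun x => (deriv ψ x) ^ 2)
          ((2 : ℕ) * (deriv ψ x) ^ 1 * deriv (deriv ψ) x) x := ((hψ'd x).hasDerivAt).pow 2
      have h2 : HasDerivAt (fun x => 2 * U (ψ x)) (2 * (deriv U (ψ x) * deriv ψ x)) x :=
        ((hUd (ψ x)).hasDerivAt.comp x (hψd x).hasDerivAt).const_mul 2
      have h3 := h1.sub h2
      refine h3.congr_deriv ?_
      rw [heq x]; push_cast; ring
    have hEc : ∀ x, (deriv ψ x) ^ 2 - 2 * U (ψ x) = (deriv ψ 0) ^ 2 - 2 * U (ψ 0) :=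
      fun x => is_const_of_deriv_eq_zero (fun y => (hE y).differentiableAt)
        (fun y => (hE y).deriv) x 0
    have hInt : Integrable (fun _ : ℝ => (deriv ψ 0) ^ 2 - 2 * U (ψ 0)) := by
      refine (hint1.sub (hint2.const_mul 2)).congr ?_
      exact Filter.Eventually.of_forall (fun x => hEc x)
    have hzero : (deriv ψ 0) ^ 2 - 2 * U (ψ 0) = 0 := by
      rcases integrable_const_iff.mp hInt with h | h
      · exact h
      · exact absurd h.measure_univ_lt_top (by simp [Real.volume_univ])
    intro x; have := hEc x; linarith
  -- psi stays in the open interval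
  -- Lipschitz bound for deriv U on [-1,1]
  obtain ⟨K, hK⟩ : ∃ K, ∀ y ∈ Set.Icc (-1 : ℝ) 1, ‖deriv (deriv U) y‖ ≤ K :=
    (isCompact_Icc).exists_bound_of_continuousOn hU''cont.continuousOn
  have hK0 : 0 ≤ K := le_trans (norm_nonneg _) (hK 1 (by norm_num))
  have hlip : ∀ y ∈ Set.Icc (-1 : ℝ) 1, ∀ z ∈ Set.Icc (-1 : ℝ) 1,
      |deriv U y - deriv U z| ≤ K * |y - z| := by
    intro y hy z hz
    have := Convex.norm_image_sub_le_of_norm_deriv_le (f := deriv U)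
      (fun u _ => hU'd u) (fun u hu => hK u hu) (convex_Icc _ _) hz hy
    simpa [Real.norm_eq_abs] using this
  have hdU1 : deriv U 1 = 0 := by
    have hmin : IsLocalMin U 1 :=
      Filter.Eventually.of_forall (fun y => by rw [hU1]; exact hUnonneg y)
    exact hmin.deriv_eq_zero
  have hdUneg1 : deriv U (-1) = 0 := by
    have hmin : IsLocalMin U (-1) :=
      Filter.Eventually.of_forall (fun y => by rw [hUneg1]; exact hUnonneg y)
    exact hmin.deriv_eq_zero
  -- if ψ touches c = ±1 then ψ ≡ c
  have htouch : ∀ c : ℝ, c = 1 ∨ c = -1 → ∀ x₀ : ℝ, ψ x₀ = c → ∀ x, ψ x = c := by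
    intro c hc x₀ h0 x
    have hUc : U c = 0 := by rcases hc with h | h <;> rw [h] <;> assumption
    have hdUc : deriv U c = 0 := by rcases hc with h | h <;> rw [h] <;> assumption
    set w : ℝ → ℝ := fun x => (c - ψ x) ^ 2 + (deriv ψ x) ^ 2 with hwdef
    have hwd : ∀ x, HasDerivAt w
        (2 * (c - ψ x) * (-(deriv ψ x)) + 2 * (deriv ψ x) * deriv U (ψ x)) x := by
      intro x
      have hA : HasDerivAt (fun x => (c - ψ x) ^ 2)
          ((2 : ℕ) * (c - ψ x) ^ 1 * (0 - deriv ψ x)) x :=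
        ((hasDerivAt_const x c).sub (hψd x).hasDerivAt).pow 2
      have hB : HasDerivAt (fun x => (deriv ψ x) ^ 2)
          ((2 : ℕ) * (deriv ψ x) ^ 1 * deriv (deriv ψ) x) x := ((hψ'd x).hasDerivAt).pow 2
      have h3 := hA.add hB
      refine h3.congr_deriv ?_
      rw [heq x]; push_cast; ring
    have hwdiff : Differentiable ℝ w := fun x => (hwd x).differentiableAt
    have hwnn : ∀ x, 0 ≤ w x := fun x => by positivity
    have hwb : ∀ x, |deriv w x| ≤ (2 + 2 * K) * w x := by
      intro x
      rw [(hwd x).deriv]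
      have hUb : |deriv U (ψ x)| ≤ K * |c - ψ x| := by
        have h1 : |deriv U (ψ x) - deriv U c| ≤ K * |ψ x - c| := by
          refine hlip (ψ x) (hbound x) c ?_
          rcases hc with h | h <;> rw [h] <;> norm_num
        rw [hdUc, sub_zero] at h1
        rwa [abs_sub_comm] at h1
      set a := c - ψ x
      set b := deriv ψ x
      have habs : |2 * a * (-b) + 2 * b * deriv U (ψ x)| ≤
          2 * |a| * |b| + 2 * |b| * (K * |a|) := by
        calc |2 * a * (-b) + 2 * b * deriv U (ψ x)|
            ≤ |2 * a * (-b)| + |2 * b * deriv U (ψ x)| := abs_add_le _ _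
          _ ≤ 2 * |a| * |b| + 2 * |b| * (K * |a|) := by
              rw [abs_mul, abs_mul, abs_mul, abs_mul, abs_neg]
              have h2 : |(2 : ℝ)| = 2 := by norm_num
              rw [h2]
              have := mul_le_mul_of_nonneg_left hUb
                (by positivity : (0:ℝ) ≤ 2 * |b|)
              nlinarith [abs_nonneg a, abs_nonneg b]
      refine le_trans habs ?_
      have hsq : 2 * |a| * |b| ≤ |a| ^ 2 + |b| ^ 2 := by nlinarith [sq_nonneg (|a| - |b|)]
      have hsa : |a| ^ 2 = a ^ 2 := sq_abs a
      have hsb : |b| ^ 2 = b ^ 2 := sq_abs b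
      have hwx : w x = a ^ 2 + b ^ 2 := rfl
      rw [hwx]
      nlinarith [abs_nonneg a, abs_nonneg b, sq_nonneg (|a| - |b|)]
    have hw0 : w x₀ = 0 := by
      have : (deriv ψ x₀) ^ 2 = 0 := by rw [key x₀, h0, hUc]; ring
      simp [hwdef, h0, this]
    have := gronwall_zero (by positivity : (0:ℝ) ≤ 2 + 2 * K) hwdiff hwnn hwb hw0 x
    have hsq : (c - ψ x) ^ 2 ≤ 0 := by
      have h2 : (0:ℝ) ≤ (deriv ψ x) ^ 2 := sq_nonneg _
      have hwx : (c - ψ x) ^ 2 + (deriv ψ x) ^ 2 = 0 := this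
      linarith
    nlinarith [sq_nonneg (c - ψ x)]
  have hIoo : ∀ x : ℝ, ψ x ∈ Set.Ioo (-1 : ℝ) 1 := by
    intro x
    constructor
    · rcases lt_or_eq_of_le (hbound x).1 with h | h
      · exact h
      · exfalso
        have hall := htouch (-1) (Or.inr rfl) x h.symm
        have : Tendsto ψ atTop (nhds (-1 : ℝ)) := by
          have hfe : ψ = fun _ => (-1 : ℝ) := funext hall
          rw [hfe]; exact tendsto_const_nhds
        have := tendsto_nhds_unique hlim_top this
        norm_num at this
    · rcases lt_or_eq_of_le (hbound x).2 with h | h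
      · exact h
      · exfalso
        have hall := htouch 1 (Or.inl rfl) x h
        have : Tendsto ψ atBot (nhds (1 : ℝ)) := by
          have hfe : ψ = fun _ => (1 : ℝ) := funext hall
          rw [hfe]; exact tendsto_const_nhds
        have := tendsto_nhds_unique hlim_bot this
        norm_num at this
  -- positive derivative
  have hψ'ne : ∀ x, deriv ψ x ≠ 0 := by
    intro x h
    have h1 := key x
    have h2 := hUpos _ (hIoo x)
    rw [h] at h1
    nlinarith
  have hψ'pos : ∀ x : ℝ, 0 < deriv ψ x := by
    by_contra hcon
    push_neg at hcon
    obtain ⟨b, hb⟩ := hcon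
    have hbneg : deriv ψ b < 0 := lt_of_le_of_ne hb (hψ'ne b)
    have hallneg : ∀ x, deriv ψ x < 0 := by
      intro x
      rcases lt_trichotomy (deriv ψ x) 0 with h | h | h
      · exact h
      · exact absurd h (hψ'ne x)
      · exfalso
        have hcont : ContinuousOn (deriv ψ) (Set.uIcc b x) :=
          (hψ'c1.continuous).continuousOn
        have hmem : (0 : ℝ) ∈ Set.uIcc (deriv ψ b) (deriv ψ x) :=
          Set.mem_uIcc.mpr (Or.inl ⟨le_of_lt hbneg, le_of_lt h⟩)
        obtain ⟨c, _, hc⟩ := intermediate_value_uIcc hcont hmem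
        exact hψ'ne c hc
    have hanti : StrictAnti ψ := strictAnti_of_deriv_neg hallneg
    have h1 : (1 : ℝ) ≤ ψ 1 :=
      le_of_tendsto hlim_top (eventually_atTop.mpr ⟨1, fun y hy => hanti.antitone hy⟩)
    exact absurd h1 (not_le.mpr (hIoo 1).2)
  -- first order ODE
  have hψ'eq : ∀ x, deriv ψ x = Real.sqrt (2 * U (ψ x)) := by
    intro x
    rw [← key x, Real.sqrt_sq (le_of_lt (hψ'pos x))]
  -- the function under the integral
  set f : ℝ → ℝ := fun y => (Real.sqrt (2 * U y))⁻¹ with hf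
  have hfca : ∀ t ∈ Set.Ioo (-1 : ℝ) 1, ContinuousAt f t := by
    intro t ht
    have hne : Real.sqrt (2 * U t) ≠ 0 :=
      ne_of_gt (Real.sqrt_pos.mpr (by linarith [hUpos t ht]))
    exact ((Real.continuous_sqrt.comp (continuous_const.mul hUsmooth.continuous)).continuousAt).inv₀ hne
  have hfm : Measurable f :=
    ((Real.continuous_sqrt.comp (continuous_const.mul hUsmooth.continuous)).measurable).inv
  have hfint : ∀ s ∈ Set.Ioo (-1 : ℝ) 1, ∀ t ∈ Set.Ioo (-1 : ℝ) 1,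
      IntervalIntegrable f volume s t := by
    intro s hs t ht
    have hsub : Set.uIcc s t ⊆ Set.Ioo (-1 : ℝ) 1 :=
      (Set.ordConnected_Ioo).uIcc_subset hs ht
    exact (ContinuousOn.mono (fun y hy => (hfca y hy).continuousWithinAt) hsub).intervalIntegrable
  have h0mem : (0 : ℝ) ∈ Set.Ioo (-1 : ℝ) 1 := by norm_num
  -- G and its derivative
  set G : ℝ → ℝ := fun t => ∫ y in (0:ℝ)..t, f y with hGdef
  have hG : ∀ t ∈ Set.Ioo (-1 : ℝ) 1, HasDerivAt G (f t) t := by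
    intro t ht
    exact intervalIntegral.integral_hasDerivAt_right (hfint 0 h0mem t ht)
      (hfm.aestronglyMeasurable.stronglyMeasurableAtFilter) (hfca t ht)
  have hΦ : ∀ x : ℝ, HasDerivAt (fun x => G (ψ x)) 1 x := by
    intro x
    have h1 := (hG (ψ x) (hIoo x)).comp x (hψd x).hasDerivAt
    have h2 : f (ψ x) * deriv ψ x = 1 := by
      rw [hf, hψ'eq x]
      exact inv_mul_cancel₀ (ne_of_gt (by rw [← hψ'eq x]; exact hψ'pos x))
    rwa [h2] at h1
  -- G ∘ ψ is x plus a constant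
  have hconst : ∀ x : ℝ, G (ψ x) - x = G (ψ 0) - 0 := by
    have hd : ∀ x : ℝ, HasDerivAt (fun x => G (ψ x) - x) 0 x := by
      intro x
      have h := (hΦ x).sub (hasDerivAt_id x); rw [sub_self] at h; exact h
    exact fun x => is_const_of_deriv_eq_zero
      (fun y => ((hd y).differentiableAt)) (fun y => (hd y).deriv) x 0
  -- injectivity of G on Ioo
  have hinj : ∀ s ∈ Set.Ioo (-1 : ℝ) 1, ∀ t ∈ Set.Ioo (-1 : ℝ) 1, G s = G t → s = t := by
    have hlt : ∀ s ∈ Set.Ioo (-1 : ℝ) 1, ∀ t ∈ Set.Ioo (-1 : ℝ) 1, s < t → G s < G t := by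
      intro s hs t ht hst
      have hpos : 0 < ∫ y in s..t, f y := by
        apply intervalIntegral.intervalIntegral_pos_of_pos_on (hfint s hs t ht)
        · intro y hy
          have hy' : y ∈ Set.Ioo (-1 : ℝ) 1 :=
            ⟨lt_trans hs.1 hy.1, lt_trans hy.2 ht.2⟩
          exact inv_pos.mpr (Real.sqrt_pos.mpr (by linarith [hUpos y hy']))
        · exact hst
      have hadd : G s + ∫ y in s..t, f y = G t :=
        intervalIntegral.integral_add_adjacent_intervals (hfint 0 h0mem s hs) (hfint s hs t ht)
      linarith
    intro s hs t ht hG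
    rcases lt_trichotomy s t with h | h | h
    · exact absurd hG (ne_of_lt (hlt s hs t ht h))
    · exact h
    · exact absurd hG.symm (ne_of_lt (hlt t ht s hs h))
  -- conclude
  refine ⟨-(G (ψ 0)), fun x => ?_⟩
  have h1 : G (H (x - -(G (ψ 0)))) = x - -(G (ψ 0)) := hHinv _
  have h2 : G (ψ x) = x - -(G (ψ 0)) := by
    have := hconst x; ring_nf; ring_nf at this; linarith
  exact hinj (ψ x) (hIoo x) (H (x - -(G (ψ 0)))) (hHrange _) (by rw [h2, h1])
end

section
/- (Virial-type identity bound) For any M > 0 there exists C > 0 such that the following holds. Let χ̃, w, g : ℝ → ℝ be continuously differentiable functions with χ̃ and χ̃' bounded, ∫_ℝ (w(x)² + w'(x)²) dx ≤ M², and ∫_ℝ (g(x)² + g'(x)²) dx ≤ 1. Then |∫_ℝ χ̃(x) g'(x) (U'(w(x) + g(x)) − U'(w(x))) dx + ∫_ℝ χ̃(x) w'(x) (U'(w(x) + g(x)) − U'(w(x)) − U''(w(x)) g(x)) dx| ≤ C (sup_{x∈ℝ} |χ̃'(x)|) ∫_ℝ (g(x)² + g'(x)²) dx. -/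
open MeasureTheory Filter Set Topology

lemma mvt_seg (f f' : ℝ → ℝ) (hf : ∀ y, HasDerivAt f (f' y) y) (a b C : ℝ)
    (hC : ∀ t ∈ Set.Icc (0:ℝ) 1, |f' (a + t * (b - a))| ≤ C) :
    |f b - f a| ≤ C * |b - a| := by
  have key : ∀ t ∈ Set.Icc (0:ℝ) 1,
      HasDerivWithinAt (fun t => f (a + t * (b - a))) (f' (a + t * (b - a)) * (b - a))
        (Set.Icc 0 1) t := by
    intro t ht
    have h1 : HasDerivAt (fun t : ℝ => a + t * (b - a)) (b - a) t := by
      simpa using ((hasDerivAt_id t).mul_const (b - a)).const_add a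
    exact ((hf _).comp t h1).hasDerivWithinAt
  have hb : ∀ t ∈ Set.Ico (0:ℝ) 1, ‖f' (a + t * (b - a)) * (b - a)‖ ≤ C * |b - a| := by
    intro t ht
    rw [Real.norm_eq_abs, abs_mul]
    exact mul_le_mul_of_nonneg_right (hC t ⟨ht.1, ht.2.le⟩) (abs_nonneg _)
  have := norm_image_sub_le_of_norm_deriv_le_segment_01' key hb
  simpa [Real.norm_eq_abs] using this

lemma l2_sup_sq (f : ℝ → ℝ) (hf : ContDiff ℝ 1 f)
    (h1 : Integrable (fun x => f x ^ 2)) (h2 : Integrable (fun x => deriv f x ^ 2)) (x : ℝ) :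
    f x ^ 2 ≤ ∫ y : ℝ, (f y ^ 2 + deriv f y ^ 2) := by
  have hfd : Differentiable ℝ f := hf.differentiable one_ne_zero
  have hder : ∀ y, HasDerivAt (fun y => f y ^ 2) (2 * f y * deriv f y) y := by
    intro y
    exact ((hfd y).hasDerivAt.pow 2).congr_deriv (by norm_num)
  have hcont' : Continuous (deriv f) := hf.continuous_deriv le_rfl
  have hmaj : Integrable (fun y : ℝ => f y ^ 2 + deriv f y ^ 2) := h1.add h2
  have hF'int : Integrable (fun y => 2 * f y * deriv f y) := by
    refine hmaj.mono' ?_ (Filter.Eventually.of_forall fun y => ?_)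
    · exact ((continuous_const.mul hf.continuous).mul hcont').aestronglyMeasurable
    · rw [Real.norm_eq_abs]
      have := sq_nonneg (f y - deriv f y)
      have := sq_nonneg (f y + deriv f y)
      rw [abs_le]
      constructor <;> nlinarith
  have htend : Tendsto (fun y => f y ^ 2) atTop (𝓝 0) :=
    tendsto_zero_of_hasDerivAt_of_integrableOn_Ioi (a := x) (fun y _ => hder y)
      hF'int.integrableOn h1.integrableOn
  have heq : ∫ y in Set.Ioi x, 2 * f y * deriv f y = 0 - f x ^ 2 :=
    integral_Ioi_of_hasDerivAt_of_tendsto' (fun y _ => hder y) hF'int.integrableOn htend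
  have h3 : f x ^ 2 = -∫ y in Set.Ioi x, 2 * f y * deriv f y := by linarith
  rw [h3]
  calc -∫ y in Set.Ioi x, 2 * f y * deriv f y
      ≤ |∫ y in Set.Ioi x, 2 * f y * deriv f y| := neg_le_abs _
    _ ≤ ∫ y in Set.Ioi x, ‖2 * f y * deriv f y‖ := by
        rw [← Real.norm_eq_abs]
        exact norm_integral_le_integral_norm _
    _ ≤ ∫ y in Set.Ioi x, (f y ^ 2 + deriv f y ^ 2) := by
        refine integral_mono hF'int.norm.integrableOn hmaj.integrableOn fun y => ?_
        have := sq_nonneg (f y - deriv f y)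
        have := sq_nonneg (f y + deriv f y)
        rw [Real.norm_eq_abs, abs_le]
        constructor <;> nlinarith
    _ ≤ ∫ y : ℝ, (f y ^ 2 + deriv f y ^ 2) := by
        refine setIntegral_le_integral hmaj (Filter.Eventually.of_forall fun y => ?_)
        positivity
/-- Virial-type identity bound. -/
theorem virial_bound
    (U : ℝ → ℝ) (hUsmooth : ContDiff ℝ (⊤ : ℕ∞) U) (hUnonneg : ∀ φ, 0 ≤ U φ)
    (hUeven : ∀ φ, U (-φ) = U φ) (hU1 : U 1 = 0) (hUneg1 : U (-1) = 0)
    (hUpos : ∀ φ ∈ Set.Ioo (-1 : ℝ) 1, 0 < U φ)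
    (hU''1 : deriv (deriv U) 1 = 1) (hU''neg1 : deriv (deriv U) (-1) = 1) :
    ∀ M > (0:ℝ), ∃ C > (0:ℝ), ∀ χt w g : ℝ → ℝ,
      ContDiff ℝ 1 χt → ContDiff ℝ 1 w → ContDiff ℝ 1 g →
      (∃ B : ℝ, ∀ x : ℝ, |χt x| ≤ B) →
      ∀ C' : ℝ, (∀ x : ℝ, |deriv χt x| ≤ C') →
      Integrable (fun x : ℝ => (w x) ^ 2) →
      Integrable (fun x : ℝ => (deriv w x) ^ 2) →
      (∫ x : ℝ, ((w x) ^ 2 + (deriv w x) ^ 2)) ≤ M ^ 2 →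
      Integrable (fun x : ℝ => (g x) ^ 2) →
      Integrable (fun x : ℝ => (deriv g x) ^ 2) →
      (∫ x : ℝ, ((g x) ^ 2 + (deriv g x) ^ 2)) ≤ 1 →
      |(∫ x : ℝ, χt x * deriv g x * (deriv U (w x + g x) - deriv U (w x))) +
        (∫ x : ℝ, χt x * deriv w x *
          (deriv U (w x + g x) - deriv U (w x) - deriv (deriv U) (w x) * g x))| ≤
      C * C' * ∫ x : ℝ, ((g x) ^ 2 + (deriv g x) ^ 2) := by
  intro M hM
  -- smoothness facts about U
  have hUinf : ContDiff ℝ (⊤ : ℕ∞) U := hUsmooth.of_le (by simp)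
  have hU1d : Differentiable ℝ U := hUinf.differentiable (by simp)
  have hU' : ContDiff ℝ (⊤ : ℕ∞) (deriv U) := (contDiff_infty_iff_deriv.mp hUinf).2
  have hU'd : Differentiable ℝ (deriv U) := hU'.differentiable (by simp)
  have cU' : Continuous (deriv U) := hU'.continuous
  have cU'' : Continuous (deriv (deriv U)) := (contDiff_infty_iff_deriv.mp hU').2.continuous
  set R : ℝ := M + 2 with hRdef
  obtain ⟨L₀, hL₀⟩ := (isCompact_Icc (a := -R) (b := R)).exists_bound_of_continuousOn
    cU''.continuousOn
  set L : ℝ := max L₀ 1 with hLdef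
  have hL1 : (1:ℝ) ≤ L := le_max_right _ _
  have hL0 : (0:ℝ) ≤ L := by linarith
  have hL : ∀ y ∈ Set.Icc (-R) R, |deriv (deriv U) y| ≤ L := by
    intro y hy
    calc |deriv (deriv U) y| = ‖deriv (deriv U) y‖ := (Real.norm_eq_abs _).symm
      _ ≤ L₀ := hL₀ y hy
      _ ≤ L := le_max_left _ _
  refine ⟨L, by linarith, ?_⟩
  intro χt w g hχt hw hg hBex C' hC' hw2 hw'2 hwM hg2 hg'2 hgone
  obtain ⟨B₀, hB₀⟩ := hBex
  have hB0 : (0:ℝ) ≤ B₀ := (abs_nonneg _).trans (hB₀ 0)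
  have hC'0 : (0:ℝ) ≤ C' := (abs_nonneg _).trans (hC' 0)
  -- sup bounds
  have hwb : ∀ x, |w x| ≤ M := by
    intro x
    have h := (l2_sup_sq w hw hw2 hw'2 x).trans hwM
    nlinarith [sq_abs (w x), abs_nonneg (w x)]
  have hgb : ∀ x, |g x| ≤ 1 := by
    intro x
    have h := (l2_sup_sq g hg hg2 hg'2 x).trans hgone
    nlinarith [sq_abs (g x), abs_nonneg (g x)]
  have hwin : ∀ x, w x ∈ Set.Icc (-R) R := by
    intro x
    have := abs_le.mp (hwb x)
    constructor <;> [linarith; linarith]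
  have hwgin : ∀ x, w x + g x ∈ Set.Icc (-R) R := by
    intro x
    have h1 := abs_le.mp (hwb x); have h2 := abs_le.mp (hgb x)
    constructor <;> [linarith; linarith]
  -- Lipschitz bound for deriv U on the compact interval
  have lip : ∀ a b, a ∈ Set.Icc (-R) R → b ∈ Set.Icc (-R) R →
      |deriv U b - deriv U a| ≤ L * |b - a| := by
    intro a b ha hb
    refine mvt_seg (deriv U) (deriv (deriv U)) (fun y => (hU'd y).hasDerivAt) a b L ?_
    intro t ht
    refine hL _ ?_
    constructor <;> nlinarith [ha.1, ha.2, hb.1, hb.2, ht.1, ht.2]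
  -- Taylor bound for U
  have tay : ∀ a b, a ∈ Set.Icc (-R) R → b ∈ Set.Icc (-R) R →
      |U b - U a - deriv U a * (b - a)| ≤ L * (b - a) ^ 2 := by
    intro a b ha hb
    have hder : ∀ y, HasDerivAt (fun y => U y - deriv U a * y) (deriv U y - deriv U a) y := by
      intro y
      exact ((hU1d y).hasDerivAt.sub ((hasDerivAt_id y).const_mul (deriv U a))).congr_deriv (by simp)
    have key := mvt_seg (fun y => U y - deriv U a * y) (fun y => deriv U y - deriv U a)
        hder a b (L * |b - a|) ?_
    · have e : U b - deriv U a * b - (U a - deriv U a * a) = U b - U a - deriv U a * (b - a) := by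
        ring
      rw [e] at key
      calc |U b - U a - deriv U a * (b - a)| ≤ L * |b - a| * |b - a| := key
        _ = L * (b - a) ^ 2 := by rw [mul_assoc, ← abs_mul, ← sq, abs_sq]
    · intro t ht
      have hmem : a + t * (b - a) ∈ Set.Icc (-R) R := by
        constructor <;> nlinarith [ha.1, ha.2, hb.1, hb.2, ht.1, ht.2]
      have h1 := lip a (a + t * (b - a)) ha hmem
      have e : a + t * (b - a) - a = t * (b - a) := by ring
      rw [e] at h1
      refine h1.trans ?_
      rw [abs_mul]
      have ht1 : |t| ≤ 1 := abs_le.mpr ⟨by linarith [ht.1], ht.2⟩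
      have h2 : |t| * |b - a| ≤ 1 * |b - a| :=
        mul_le_mul_of_nonneg_right ht1 (abs_nonneg _)
      rw [one_mul] at h2
      exact mul_le_mul_of_nonneg_left h2 hL0
  -- continuity facts
  have cw : Continuous w := hw.continuous
  have cg : Continuous g := hg.continuous
  have cχ : Continuous χt := hχt.continuous
  have cw' : Continuous (deriv w) := hw.continuous_deriv le_rfl
  have cg' : Continuous (deriv g) := hg.continuous_deriv le_rfl
  have cχ' : Continuous (deriv χt) := hχt.continuous_deriv le_rfl
  set G : ℝ → ℝ := fun x => U (w x + g x) - U (w x) - deriv U (w x) * g x with hGdef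
  set G' : ℝ → ℝ := fun x =>
    deriv U (w x + g x) * (deriv w x + deriv g x) - deriv U (w x) * deriv w x -
      (deriv (deriv U) (w x) * deriv w x * g x + deriv U (w x) * deriv g x) with hG'def
  have hGd : ∀ x, HasDerivAt G (G' x) x := by
    intro x
    have hwx : HasDerivAt w (deriv w x) x := (hw.differentiable one_ne_zero x).hasDerivAt
    have hgx : HasDerivAt g (deriv g x) x := (hg.differentiable one_ne_zero x).hasDerivAt
    have h1 : HasDerivAt (fun x => U (w x + g x))
        (deriv U (w x + g x) * (deriv w x + deriv g x)) x :=
      HasDerivAt.comp x (hU1d (w x + g x)).hasDerivAt (hwx.add hgx)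
    have h2 : HasDerivAt (fun x => U (w x)) (deriv U (w x) * deriv w x) x :=
      HasDerivAt.comp x (hU1d (w x)).hasDerivAt hwx
    have h3 : HasDerivAt (fun x => deriv U (w x)) (deriv (deriv U) (w x) * deriv w x) x :=
      HasDerivAt.comp x (hU'd (w x)).hasDerivAt hwx
    exact (h1.sub h2).sub (h3.mul hgx)
  have cG : Continuous G :=
    ((hUinf.continuous.comp (cw.add cg)).sub (hUinf.continuous.comp cw)).sub
      ((cU'.comp cw).mul cg)
  have hGb : ∀ x, |G x| ≤ L * g x ^ 2 := by
    intro x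
    have h := tay (w x) (w x + g x) (hwin x) (hwgin x)
    simp only [hGdef]
    simpa [add_sub_cancel_left] using h
  have hlipg : ∀ x, |deriv U (w x + g x) - deriv U (w x)| ≤ L * |g x| := by
    intro x
    have h := lip (w x) (w x + g x) (hwin x) (hwgin x)
    simpa [add_sub_cancel_left] using h
  have habs2 : ∀ a b : ℝ, |a| * |b| ≤ a ^ 2 + b ^ 2 := by
    intro a b
    nlinarith [sq_abs a, sq_abs b, sq_nonneg (|a| - |b|), abs_nonneg a, abs_nonneg b]
  have hI1b : ∀ x, |χt x * deriv g x * (deriv U (w x + g x) - deriv U (w x))|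
      ≤ B₀ * L * (g x ^ 2 + deriv g x ^ 2) := by
    intro x
    rw [abs_mul, abs_mul]
    have h2 : |χt x| * |deriv g x| * |deriv U (w x + g x) - deriv U (w x)|
        ≤ B₀ * |deriv g x| * (L * |g x|) := by
      apply mul_le_mul (mul_le_mul_of_nonneg_right (hB₀ x) (abs_nonneg _)) (hlipg x)
        (abs_nonneg _)
      positivity
    refine h2.trans ?_
    calc B₀ * |deriv g x| * (L * |g x|) = B₀ * L * (|g x| * |deriv g x|) := by ring
      _ ≤ B₀ * L * (g x ^ 2 + deriv g x ^ 2) :=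
        mul_le_mul_of_nonneg_left (habs2 _ _) (by positivity)
  have hI2b : ∀ x, |χt x * deriv w x *
      (deriv U (w x + g x) - deriv U (w x) - deriv (deriv U) (w x) * g x)|
      ≤ B₀ * (2 * L) * (deriv w x ^ 2 + g x ^ 2) := by
    intro x
    have h2 : |deriv (deriv U) (w x) * g x| ≤ L * |g x| := by
      rw [abs_mul]
      exact mul_le_mul_of_nonneg_right (hL _ (hwin x)) (abs_nonneg _)
    have h3 : |deriv U (w x + g x) - deriv U (w x) - deriv (deriv U) (w x) * g x|
        ≤ 2 * L * |g x| := by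
      have h4 := abs_add_le (deriv U (w x + g x) - deriv U (w x))
        (-(deriv (deriv U) (w x) * g x))
      rw [abs_neg] at h4
      have h5 : deriv U (w x + g x) - deriv U (w x) + -(deriv (deriv U) (w x) * g x)
          = deriv U (w x + g x) - deriv U (w x) - deriv (deriv U) (w x) * g x := by ring
      rw [h5] at h4
      linarith [hlipg x]
    rw [abs_mul, abs_mul]
    have h6 : |χt x| * |deriv w x| *
        |deriv U (w x + g x) - deriv U (w x) - deriv (deriv U) (w x) * g x|
        ≤ B₀ * |deriv w x| * (2 * L * |g x|) := by
      apply mul_le_mul (mul_le_mul_of_nonneg_right (hB₀ x) (abs_nonneg _)) h3 (abs_nonneg _)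
      positivity
    refine h6.trans ?_
    calc B₀ * |deriv w x| * (2 * L * |g x|) = B₀ * (2 * L) * (|deriv w x| * |g x|) := by ring
      _ ≤ B₀ * (2 * L) * (deriv w x ^ 2 + g x ^ 2) :=
        mul_le_mul_of_nonneg_left (habs2 _ _) (by positivity)
  -- integrability
  have hI1int : Integrable
      (fun x => χt x * deriv g x * (deriv U (w x + g x) - deriv U (w x))) := by
    refine ((hg2.add hg'2).const_mul (B₀ * L)).mono'
      ((cχ.mul cg').mul ((cU'.comp (cw.add cg)).sub (cU'.comp cw))).aestronglyMeasurable
      (Filter.Eventually.of_forall fun x => ?_)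
    rw [Real.norm_eq_abs]
    exact hI1b x
  have hI2int : Integrable (fun x => χt x * deriv w x *
      (deriv U (w x + g x) - deriv U (w x) - deriv (deriv U) (w x) * g x)) := by
    refine ((hw'2.add hg2).const_mul (B₀ * (2 * L))).mono'
      ((cχ.mul cw').mul (((cU'.comp (cw.add cg)).sub (cU'.comp cw)).sub
        ((cU''.comp cw).mul cg))).aestronglyMeasurable
      (Filter.Eventually.of_forall fun x => ?_)
    rw [Real.norm_eq_abs]
    exact hI2b x
  have hχ'Gb : ∀ x, |deriv χt x * G x| ≤ C' * L * g x ^ 2 := by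
    intro x
    rw [abs_mul]
    calc |deriv χt x| * |G x| ≤ C' * (L * g x ^ 2) :=
        mul_le_mul (hC' x) (hGb x) (abs_nonneg _) hC'0
      _ = C' * L * g x ^ 2 := by ring
  have hχ'Gint : Integrable (fun x => deriv χt x * G x) := by
    refine (hg2.const_mul (C' * L)).mono' ((cχ'.mul cG).aestronglyMeasurable)
      (Filter.Eventually.of_forall fun x => ?_)
    rw [Real.norm_eq_abs]
    exact hχ'Gb x
  have hHint : Integrable (fun x => χt x * G x) := by
    refine (hg2.const_mul (B₀ * L)).mono' ((cχ.mul cG).aestronglyMeasurable)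
      (Filter.Eventually.of_forall fun x => ?_)
    rw [Real.norm_eq_abs, abs_mul]
    calc |χt x| * |G x| ≤ B₀ * (L * g x ^ 2) :=
        mul_le_mul (hB₀ x) (hGb x) (abs_nonneg _) hB0
      _ = B₀ * L * g x ^ 2 := by ring
  have hsum : ∀ x, χt x * deriv g x * (deriv U (w x + g x) - deriv U (w x)) +
      χt x * deriv w x *
        (deriv U (w x + g x) - deriv U (w x) - deriv (deriv U) (w x) * g x)
      = χt x * G' x := by
    intro x
    simp only [hG'def]
    ring
  have hχG'int : Integrable (fun x => χt x * G' x) :=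
    (hI1int.add hI2int).congr (Filter.Eventually.of_forall hsum)
  have hHd : ∀ x, HasDerivAt (fun x => χt x * G x) (deriv χt x * G x + χt x * G' x) x :=
    fun x => ((hχt.differentiable one_ne_zero x).hasDerivAt).mul (hGd x)
  have hzero : ∫ x : ℝ, (deriv χt x * G x + χt x * G' x) = 0 :=
    integral_eq_zero_of_hasDerivAt_of_integrable hHd (hχ'Gint.add hχG'int) hHint
  have hsplit := integral_add hχ'Gint hχG'int
  have key : (∫ x : ℝ, χt x * deriv g x * (deriv U (w x + g x) - deriv U (w x))) +
      (∫ x : ℝ, χt x * deriv w x *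
        (deriv U (w x + g x) - deriv U (w x) - deriv (deriv U) (w x) * g x))
      = - ∫ x : ℝ, deriv χt x * G x := by
    rw [← integral_add hI1int hI2int,
      integral_congr_ae (Filter.Eventually.of_forall hsum)]
    linarith [hsplit, hzero]
  rw [key, abs_neg]
  have s1 : |∫ x : ℝ, deriv χt x * G x| ≤ ∫ x : ℝ, ‖deriv χt x * G x‖ := by
    rw [← Real.norm_eq_abs]
    exact norm_integral_le_integral_norm _
  have s2 : ∫ x : ℝ, ‖deriv χt x * G x‖ ≤ ∫ x : ℝ, C' * L * g x ^ 2 := by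
    refine integral_mono hχ'Gint.norm (hg2.const_mul _) fun x => ?_
    rw [Real.norm_eq_abs]
    exact hχ'Gb x
  have s3 : ∫ x : ℝ, C' * L * g x ^ 2 = C' * L * ∫ x : ℝ, g x ^ 2 :=
    integral_const_mul _ _
  have s4 : ∫ x : ℝ, g x ^ 2 ≤ ∫ x : ℝ, (g x ^ 2 + deriv g x ^ 2) :=
    integral_mono hg2 (hg2.add hg'2) fun x => le_add_of_nonneg_right (sq_nonneg _)
  have s5 : C' * L * ∫ x : ℝ, g x ^ 2 ≤ C' * L * ∫ x : ℝ, (g x ^ 2 + deriv g x ^ 2) :=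
    mul_le_mul_of_nonneg_left s4 (mul_nonneg hC'0 hL0)
  linarith
end

section
/- For all γ > 0 and α ∈ (−∞, γ) there exists C = C(γ, α) > 0 such that for every T₀ > 0 and every continuously differentiable function z : [T₀, ∞) → ℝ, one has ‖z'‖_{W_{α,γ}} ≤ C ‖z‖_{N_γ}; that is, sup_{τ ≥ t ≥ T₀} t^{γ−α} |∫_t^τ s^α z'(s) ds| ≤ C sup_{t ≥ T₀} t^γ |z(t)|. -/
open MeasureTheory Filter

/-- For `0 < γ` and `α < γ`, `‖z'‖_{W_{α,γ}} ≤ C ‖z‖_{N_γ}`: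
if `t^γ |z(t)| ≤ N` for all `t ≥ T₀`, then
`t^{γ−α} |∫_t^τ s^α z'(s) ds| ≤ C N` for all `τ ≥ t ≥ T₀`. -/
theorem W_norm_of_derivative_bounded_by_N_norm (γ α : ℝ) (hγ : 0 < γ) (hα : α < γ) :
    ∃ C > (0:ℝ), ∀ T₀ : ℝ, 0 < T₀ → ∀ z z' : ℝ → ℝ,
      (∀ t ∈ Set.Ici T₀, HasDerivWithinAt z (z' t) (Set.Ici T₀) t) →
      ContinuousOn z' (Set.Ici T₀) →
      ∀ N : ℝ, (∀ t ∈ Set.Ici T₀, t ^ γ * |z t| ≤ N) →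
      ∀ t τ : ℝ, T₀ ≤ t → t ≤ τ →
        t ^ (γ - α) * |∫ s in t..τ, s ^ α * z' s| ≤ C * N := by
  have hga : (0:ℝ) < γ - α := sub_pos.2 hα
  refine ⟨2 + |α| / (γ - α),
    add_pos_of_pos_of_nonneg two_pos (div_nonneg (abs_nonneg _) hga.le), ?_⟩
  intro T₀ hT₀ z z' hz hz' N hN t τ ht htτ
  have ht0 : 0 < t := hT₀.trans_le ht
  have hτ0 : 0 < τ := ht0.trans_le htτ
  have hNnn : 0 ≤ N :=
    le_trans (mul_nonneg (Real.rpow_nonneg hT₀.le γ) (abs_nonneg _)) (hN T₀ Set.self_mem_Ici)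
  -- points of [t,τ] are positive and ≥ T₀
  have hmem : ∀ s ∈ Set.Icc t τ, T₀ ≤ s := fun s hs => ht.trans hs.1
  have hpos : ∀ s ∈ Set.Icc t τ, (0:ℝ) < s := fun s hs => ht0.trans_le hs.1
  have huIcc : Set.uIcc t τ = Set.Icc t τ := Set.uIcc_of_le htτ
  -- continuity of z on Icc t τ
  have hzc : ContinuousOn z (Set.Icc t τ) := fun s hs =>
    ((hz s (hmem s hs)).continuousWithinAt).mono fun x hx => hmem x hx
  have hz'c : ContinuousOn z' (Set.Icc t τ) := hz'.mono fun x hx => hmem x hx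
  -- integration by parts
  have hu : ∀ s ∈ Set.uIcc t τ, HasDerivWithinAt (fun x : ℝ => x ^ α)
      (α * s ^ (α - 1)) (Set.uIcc t τ) s := by
    intro s hs
    rw [huIcc] at hs
    exact (Real.hasDerivAt_rpow_const (Or.inl (hpos s hs).ne')).hasDerivWithinAt
  have hv : ∀ s ∈ Set.uIcc t τ, HasDerivWithinAt z (z' s) (Set.uIcc t τ) s := by
    intro s hs
    rw [huIcc] at hs
    exact (hz s (hmem s hs)).mono fun x hx => hmem x (huIcc ▸ hx)
  have hu'int : IntervalIntegrable (fun s : ℝ => α * s ^ (α - 1)) volume t τ := by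
    apply ContinuousOn.intervalIntegrable
    rw [huIcc]
    exact continuousOn_const.mul (fun s hs =>
      (Real.continuousAt_rpow_const s (α - 1) (Or.inl (hpos s hs).ne')).continuousWithinAt)
  have hv'int : IntervalIntegrable z' volume t τ := by
    apply ContinuousOn.intervalIntegrable
    rw [huIcc]; exact hz'c
  have hparts := intervalIntegral.integral_mul_deriv_eq_deriv_mul_of_hasDerivWithinAt
    hu hv hu'int hv'int
  rw [hparts]
  -- bound the boundary terms
  have hbound : ∀ s : ℝ, T₀ ≤ s → t ≤ s → t ^ (γ - α) * |s ^ α * z s| ≤ N := by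
    intro s hTs hts
    have hs0 : 0 < s := hT₀.trans_le hTs
    have h1 : t ^ (γ - α) ≤ s ^ (γ - α) := Real.rpow_le_rpow ht0.le hts hga.le
    calc t ^ (γ - α) * |s ^ α * z s| ≤ s ^ (γ - α) * |s ^ α * z s| := by
          apply mul_le_mul_of_nonneg_right h1 (abs_nonneg _)
      _ = s ^ γ * |z s| := by
          rw [abs_mul, abs_of_nonneg (Real.rpow_nonneg hs0.le α), ← mul_assoc,
            ← Real.rpow_add hs0]
          ring_nf
      _ ≤ N := hN s hTs
  -- bound the integral term
  have hIbound : t ^ (γ - α) * |∫ s in t..τ, α * s ^ (α - 1) * z s| ≤ |α| / (γ - α) * N := by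
    have hint1 : IntervalIntegrable (fun s : ℝ => |α * s ^ (α - 1) * z s|) volume t τ := by
      apply ContinuousOn.intervalIntegrable
      rw [huIcc]
      exact (continuousOn_const.mul (fun s hs =>
        (Real.continuousAt_rpow_const s (α - 1) (Or.inl (hpos s hs).ne')).continuousWithinAt)
        |>.mul hzc).abs
    have hint2 : IntervalIntegrable (fun s : ℝ => |α| * N * s ^ (α - γ - 1)) volume t τ := by
      apply ContinuousOn.intervalIntegrable
      rw [huIcc]
      exact continuousOn_const.mul (fun s hs =>
        (Real.continuousAt_rpow_const s (α - γ - 1) (Or.inl (hpos s hs).ne')).continuousWithinAt)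
    have hptwise : ∀ s ∈ Set.Icc t τ, |α * s ^ (α - 1) * z s| ≤ |α| * N * s ^ (α - γ - 1) := by
      intro s hs
      have hs0 : 0 < s := hpos s hs
      have h1 : |z s| ≤ N * s ^ (-γ) := by
        rw [Real.rpow_neg hs0.le, mul_comm N, inv_mul_eq_div,
          le_div_iff₀ (Real.rpow_pos_of_pos hs0 γ)]
        calc |z s| * s ^ γ = s ^ γ * |z s| := by ring
          _ ≤ N := hN s (hmem s hs)
      calc |α * s ^ (α - 1) * z s| = |α| * s ^ (α - 1) * |z s| := by
            rw [abs_mul, abs_mul, abs_of_nonneg (Real.rpow_nonneg hs0.le _)]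
        _ ≤ |α| * s ^ (α - 1) * (N * s ^ (-γ)) := by
            apply mul_le_mul_of_nonneg_left h1
            exact mul_nonneg (abs_nonneg _) (Real.rpow_nonneg hs0.le _)
        _ = |α| * N * s ^ (α - γ - 1) := by
            rw [show α - γ - 1 = (α - 1) + -γ by ring, Real.rpow_add hs0]
            ring
    have habs : |∫ s in t..τ, α * s ^ (α - 1) * z s| ≤
        ∫ s in t..τ, |α| * N * s ^ (α - γ - 1) := by
      calc |∫ s in t..τ, α * s ^ (α - 1) * z s|
          ≤ ∫ s in t..τ, |α * s ^ (α - 1) * z s| :=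
            intervalIntegral.abs_integral_le_integral_abs htτ
        _ ≤ ∫ s in t..τ, |α| * N * s ^ (α - γ - 1) :=
            intervalIntegral.integral_mono_on htτ hint1 hint2 hptwise
    have hval : (∫ s in t..τ, s ^ (α - γ - 1)) ≤ t ^ (α - γ) / (γ - α) := by
      rw [integral_rpow (Or.inr ⟨by intro h; linarith,
        by rw [huIcc]; intro h; exact (hpos 0 h).false⟩)]
      have he : α - γ - 1 + 1 = α - γ := by ring
      rw [he]
      have hτt : τ ^ (α - γ) ≤ t ^ (α - γ) := by
        rw [show α - γ = -(γ - α) by ring, Real.rpow_neg ht0.le, Real.rpow_neg hτ0.le]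
        exact inv_anti₀ (Real.rpow_pos_of_pos ht0 _)
          (Real.rpow_le_rpow ht0.le htτ hga.le)
      have hτnn : 0 ≤ τ ^ (α - γ) := Real.rpow_nonneg hτ0.le _
      have hkey : (τ ^ (α - γ) - t ^ (α - γ)) / (α - γ)
          = (t ^ (α - γ) - τ ^ (α - γ)) / (γ - α) := by
        rw [div_eq_div_iff (by linarith : α - γ ≠ 0) hga.ne']; ring
      rw [hkey]
      exact (div_le_div_iff_of_pos_right hga).2 (by linarith)
    have hintnn : 0 ≤ ∫ s in t..τ, s ^ (α - γ - 1) := by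
      apply intervalIntegral.integral_nonneg htτ
      intro s hs
      exact Real.rpow_nonneg (hpos s hs).le _
    calc t ^ (γ - α) * |∫ s in t..τ, α * s ^ (α - 1) * z s|
        ≤ t ^ (γ - α) * ∫ s in t..τ, |α| * N * s ^ (α - γ - 1) := by
          apply mul_le_mul_of_nonneg_left habs (Real.rpow_nonneg ht0.le _)
      _ = t ^ (γ - α) * (|α| * N) * ∫ s in t..τ, s ^ (α - γ - 1) := by
          rw [intervalIntegral.integral_const_mul]; ring
      _ ≤ t ^ (γ - α) * (|α| * N) * (t ^ (α - γ) / (γ - α)) := by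
          apply mul_le_mul_of_nonneg_left hval
          exact mul_nonneg (Real.rpow_nonneg ht0.le _) (mul_nonneg (abs_nonneg _) hNnn)
      _ = |α| / (γ - α) * N := by
          rw [show t ^ (γ - α) * (|α| * N) * (t ^ (α - γ) / (γ - α))
            = (t ^ (γ - α) * t ^ (α - γ)) * (|α| * N / (γ - α)) by ring,
            ← Real.rpow_add ht0]
          simp
          ring
  -- combine
  have htri : |τ ^ α * z τ - t ^ α * z t - ∫ s in t..τ, α * s ^ (α - 1) * z s|
      ≤ |τ ^ α * z τ| + |t ^ α * z t| + |∫ s in t..τ, α * s ^ (α - 1) * z s| := by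
    calc |τ ^ α * z τ - t ^ α * z t - ∫ s in t..τ, α * s ^ (α - 1) * z s|
        ≤ |τ ^ α * z τ - t ^ α * z t| + |∫ s in t..τ, α * s ^ (α - 1) * z s| :=
          abs_sub _ _
      _ ≤ |τ ^ α * z τ| + |t ^ α * z t| + |∫ s in t..τ, α * s ^ (α - 1) * z s| := by
          have := abs_sub (τ ^ α * z τ) (t ^ α * z t)
          linarith
  have htnn : (0:ℝ) ≤ t ^ (γ - α) := Real.rpow_nonneg ht0.le _
  calc t ^ (γ - α) * |τ ^ α * z τ - t ^ α * z t - ∫ s in t..τ, α * s ^ (α - 1) * z s|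
      ≤ t ^ (γ - α) * (|τ ^ α * z τ| + |t ^ α * z t|
        + |∫ s in t..τ, α * s ^ (α - 1) * z s|) :=
        mul_le_mul_of_nonneg_left htri htnn
    _ = t ^ (γ - α) * |τ ^ α * z τ| + t ^ (γ - α) * |t ^ α * z t|
        + t ^ (γ - α) * |∫ s in t..τ, α * s ^ (α - 1) * z s| := by ring
    _ ≤ N + N + |α| / (γ - α) * N := by
        have h1 := hbound τ (ht.trans htτ) htτ
        have h2 := hbound t ht le_rfl
        linarith [hIbound]
    _ = (2 + |α| / (γ - α)) * N := by ring
end
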